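/- The elementary cellular automaton with Wolfram number 41, i.e. the CA f on {0,1}^ℤ with f(x)_i = 1 if and only if (x_{i-1}, x_i, x_{i+1}) ∈ {(0,0,0), (0,1,1), (1,0,1)}, is not von Neumann regular in End({0,1}^ℤ). -/

import Mathlib

/-- The shift map on the full shift `A^ℤ`: `σ(x)_i = x_{i+1}`. -/
def shiftMap {A : Type*} (x : ℤ → A) : ℤ → A := fun i => x (i + 1)

/-- A cellular automaton on the full shift `A^ℤ` (with the product topology,
`A` discrete): a continuous map commuting with the shift. -/
def IsCA {A : Type*} [TopologicalSpace A] (f : (ℤ → A) → (ℤ → A)) : Prop :=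
  Continuous f ∧ ∀ x, f (shiftMap x) = shiftMap (f x)

/-- `f` is von Neumann regular in the monoid `End(A^ℤ)` of cellular automata:
there is a CA `h` with `f ∘ h ∘ f = f` and `h ∘ f ∘ h = h`. -/
def IsRegularCA {A : Type*} [TopologicalSpace A] (f : (ℤ → A) → (ℤ → A)) : Prop :=
  ∃ h : (ℤ → A) → (ℤ → A), IsCA h ∧ f ∘ h ∘ f = f ∧ h ∘ f ∘ h = h

/-!
A regular element `f = f ∘ h ∘ f` of `End(X)` satisfies `f (h y) = y` for every `y` in the image of
`f`, and `h`, commuting with the shift, maps `3`-periodic configurations to `3`-periodic ones. For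
rule 41 the configuration `(010)^∞` is the image of `(000101)^∞`, yet a direct check of the local
rule on the three cells of a period shows that it has no `3`-periodic preimage.
-/

open Function

theorem shiftMap_iterate_apply {A : Type*} (x : ℤ → A) (n : ℕ) (i : ℤ) :
    shiftMap^[n] x i = x (i + n) := by
  induction n generalizing x with
  | zero => simp
  | succ n ih =>
    rw [iterate_succ_apply, ih, shiftMap]
    push_cast
    ring_nf

theorem isPeriodicPt_shiftMap_iff {A : Type*} {n : ℕ} {x : ℤ → A} :
    IsPeriodicPt shiftMap n x ↔ ∀ i, x (i + n) = x i := by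
  simp only [IsPeriodicPt, IsFixedPt, funext_iff, shiftMap_iterate_apply]

/-- The bi-infinite repetition of a word of length `n`. -/
def periodicConfig {A : Type*} {n : ℕ} (w : ZMod n → A) : ℤ → A := fun i => w i

theorem isPeriodicPt_periodicConfig {A : Type*} {n : ℕ} (w : ZMod n → A) :
    IsPeriodicPt shiftMap n (periodicConfig w) :=
  isPeriodicPt_shiftMap_iff.2 fun i => by simp [periodicConfig]

theorem periodicConfig_comp_castHom {A : Type*} {m n : ℕ} (hmn : m ∣ n) (w : ZMod m → A) :
    periodicConfig (w ∘ ZMod.castHom hmn (ZMod m)) = periodicConfig w := by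
  funext i
  simp only [periodicConfig, comp_apply, map_intCast]

def IsElementaryCA (rule : Bool → Bool → Bool → Bool) (f : (ℤ → Bool) → (ℤ → Bool)) : Prop :=
  ∀ x i, f x i = rule (x (i - 1)) (x i) (x (i + 1))

theorem IsElementaryCA.apply_periodicConfig {rule : Bool → Bool → Bool → Bool}
    {f : (ℤ → Bool) → (ℤ → Bool)} (hf : IsElementaryCA rule f) {n : ℕ} (w : ZMod n → Bool) :
    f (periodicConfig w) = periodicConfig fun r => rule (w (r - 1)) (w r) (w (r + 1)) := by
  funext i
  simp only [hf _ i, periodicConfig, Int.cast_sub, Int.cast_add, Int.cast_one]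

def rule41 : Bool → Bool → Bool → Bool
  | false, false, false => true
  | false, true, true => true
  | true, false, true => true
  | _, _, _ => false

theorem isElementaryCA_rule41 {f : (ℤ → Bool) → (ℤ → Bool)}
    (hf : ∀ (x : ℤ → Bool) (i : ℤ), f x i = true ↔
      (x (i - 1), x i, x (i + 1)) = (false, false, false) ∨
      (x (i - 1), x i, x (i + 1)) = (false, true, true) ∨
      (x (i - 1), x i, x (i + 1)) = (true, false, true)) :
    IsElementaryCA rule41 f := by
  intro x i
  rw [Bool.eq_iff_iff, hf]
  cases x (i - 1) <;> cases x i <;> cases x (i + 1) <;> simp [rule41]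

def word000101 : ZMod 6 → Bool := ![false, false, false, true, false, true]

def word010 : ZMod 3 → Bool := ![false, true, false]

theorem IsElementaryCA.rule41_apply_periodicConfig_word000101 {f : (ℤ → Bool) → (ℤ → Bool)}
    (hf : IsElementaryCA rule41 f) : f (periodicConfig word000101) = periodicConfig word010 := by
  rw [hf.apply_periodicConfig, ← periodicConfig_comp_castHom (by norm_num : 3 ∣ 6)]
  congr 1
  decide

theorem IsElementaryCA.rule41_apply_ne_periodicConfig_word010 {f : (ℤ → Bool) → (ℤ → Bool)}
    (hf : IsElementaryCA rule41 f) {z : ℤ → Bool} (hz : IsPeriodicPt shiftMap 3 z) :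
    f z ≠ periodicConfig word010 := by
  intro hfz
  have hrule (i : ℤ) : rule41 (z (i - 1)) (z i) (z (i + 1)) = word010 i := by
    rw [← hf, hfz, periodicConfig]
  rw [isPeriodicPt_shiftMap_iff] at hz
  have hz₂ : z (-1) = z 2 := (hz (-1)).symm
  have hz₃ : z 3 = z 0 := hz 0
  have h₀ : rule41 (z 2) (z 0) (z 1) = word010 0 := by simpa [hz₂] using hrule 0
  have h₁ : rule41 (z 0) (z 1) (z 2) = word010 1 := by simpa using hrule 1
  have h₂ : rule41 (z 1) (z 2) (z 0) = word010 2 := by simpa [hz₃] using hrule 2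
  generalize z 0 = a, z 1 = b, z 2 = c at h₀ h₁ h₂
  revert a b c
  decide

/-- The elementary cellular automaton with Wolfram number 41 is not von
Neumann regular in End({0,1}^ℤ). Here 1 is represented by `true`. -/
theorem stmt13 (f : (ℤ → Bool) → (ℤ → Bool))
    (hf : ∀ (x : ℤ → Bool) (i : ℤ), f x i = true ↔
      (x (i - 1), x i, x (i + 1)) = (false, false, false) ∨
      (x (i - 1), x i, x (i + 1)) = (false, true, true) ∨
      (x (i - 1), x i, x (i + 1)) = (true, false, true)) :
    ¬ IsRegularCA f := by
  rintro ⟨h, ⟨-, hh⟩, hfhf, -⟩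
  have hf41 := isElementaryCA_rule41 hf
  have hz : IsPeriodicPt shiftMap 3 (h (periodicConfig word010)) :=
    (isPeriodicPt_periodicConfig word010).map hh
  refine hf41.rule41_apply_ne_periodicConfig_word010 hz ?_
  rw [← hf41.rule41_apply_periodicConfig_word000101]
  exact congrFun hfhf _
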